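/- Let m ≥ 1 and suppose E ⊂ ℝ is a phaseless sampling set for V_m (every nonseparable f ∈ V_m is determined up to a sign by (|f(x)|)_{x∈E}). Then #(E ∩ (n, n+1)) ≥ 1 for every integer n. Specifically, if E ∩ (n, n+1) = ∅ for some integer n, then the functions f_1 = Σ_{k≥n} φ_m(·−k) + Σ_{k≤n−m} φ_m(·−k) and f_2 = Σ_{k≥n} φ_m(·−k) − Σ_{k≤n−m} φ_m(·−k) satisfy: f_1 and f_2 are nonseparable, f_1 ≠ ±f_2, f_1(x) = −f_2(x) for x ≤ n, and f_1(x) = f_2(x) for x ≥ n+1, hence |f_1| = |f_2| on E. -/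

import Mathlib

open MeasureTheory

/-- The degree-`m` B-spline: `(m+1)`-fold convolution of the indicator of `[0,1]`. -/
noncomputable def bspline : ℕ → ℝ → ℝ
  | 0 => Set.indicator (Set.Icc (0 : ℝ) 1) (fun _ => 1)
  | m + 1 => fun x => ∫ t in (0 : ℝ)..1, bspline m (x - t)

/-- The bi-infinite spline series `Σ_{n∈ℤ} cₙ φ_m(x-n)`; since `φ_m` is supported on
`[0, m+1]`, only the finitely many terms with `⌈x⌉ - m - 1 ≤ n ≤ ⌈x⌉` contribute. -/
noncomputable def splineSeries (m : ℕ) (c : ℤ → ℝ) (x : ℝ) : ℝ :=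
  ∑ n ∈ Finset.Icc (⌈x⌉ - (m : ℤ) - 1) ⌈x⌉, c n * bspline m (x - n)

/-- A function of `V_m` is separable if it is the sum of two nonzero elements of `V_m`
whose pointwise product vanishes identically. -/
def SeparableGlobal (m : ℕ) (c : ℤ → ℝ) : Prop :=
  ∃ c₁ c₂ : ℤ → ℝ,
    (∀ x : ℝ, splineSeries m c x = splineSeries m c₁ x + splineSeries m c₂ x) ∧
    (∃ x : ℝ, splineSeries m c₁ x ≠ 0) ∧ (∃ x : ℝ, splineSeries m c₂ x ≠ 0) ∧
    (∀ x : ℝ, splineSeries m c₁ x * splineSeries m c₂ x = 0)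

/-- `E` is a (global) phaseless sampling set for `V_m`: every nonseparable function in
`V_m` is determined up to a sign by its unsigned samples on `E`. -/
def IsGlobalPhaselessSamplingSet (m : ℕ) (E : Set ℝ) : Prop :=
  ∀ c c' : ℤ → ℝ, ¬ SeparableGlobal m c →
    (∀ x ∈ E, |splineSeries m c x| = |splineSeries m c' x|) →
    (∀ x : ℝ, splineSeries m c' x = splineSeries m c x) ∨
    (∀ x : ℝ, splineSeries m c' x = -splineSeries m c x)

/-!
Since `φ_m(· - k)` vanishes off `(k, k + m + 1)`, the two splines satisfy `f₁ = -f₂` on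
`(-∞, n]` and `f₁ = f₂` on `[n + 1, ∞)`; so they have the same moduli on any `E` missing
`(n, n + 1)`, while `f₁ > 0` gives `f₁(n) ≠ f₂(n)` and `f₁(n + 1) ≠ -f₂(n + 1)`.
Both are nonseparable because neither vanishes outside `(n, n + 1)`: if such an `f` splits as
`g + h` with `g h = 0`, then `g` and `h` are polynomials on `(n, n + 1)`, so one of them, say `g`,
vanishes there; by continuity `g(n) = g(n + 1) = 0`, and on each of the connected half-lines
`(-∞, n]`, `[n + 1, ∞)`, where `f ≠ 0`, the disjoint open sets `{g ≠ 0}` and `{h ≠ 0}` cannot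
both be met, so `g = 0` everywhere.
-/

open Set Polynomial

theorem Polynomial.exists_derivative_eq {K : Type*} [Field K] [CharZero K] (p : K[X]) :
    ∃ q : K[X], derivative q = p := by
  induction p using Polynomial.induction_on' with
  | add p q hp hq =>
    obtain ⟨P, rfl⟩ := hp
    obtain ⟨Q, rfl⟩ := hq
    exact ⟨P + Q, derivative_add⟩
  | monomial n a =>
    refine ⟨monomial (n + 1) (a / (n + 1)), ?_⟩
    rw [derivative_monomial, Nat.add_sub_cancel]
    congr 1
    push_cast
    field_simp

theorem Polynomial.integral_eval_derivative (q : ℝ[X]) (a b : ℝ) :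
    ∫ x in a..b, (derivative q).eval x = q.eval b - q.eval a :=
  intervalIntegral.integral_eq_sub_of_hasDerivAt (fun x _ => q.hasDerivAt x)
    (q.derivative.continuous.intervalIntegrable a b)

theorem IsPreconnected.eqOn_zero_of_mul_eq_zero {X : Type*} [TopologicalSpace X] {g h : X → ℝ}
    (hg : Continuous g) (hh : Continuous h) (hgh : ∀ x, g x * h x = 0) {S : Set X}
    (hS : IsPreconnected S) (hS0 : ∀ x ∈ S, g x + h x ≠ 0) {a : X} (ha : a ∈ S) (hga : g a = 0) :
    EqOn g 0 S := by
  by_contra hne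
  obtain ⟨x, hxS, hx⟩ : ∃ x ∈ S, g x ≠ 0 := by simpa [EqOn] using hne
  have hcover : S ⊆ {x | g x ≠ 0} ∪ {x | h x ≠ 0} := fun y hy => by
    by_contra hc
    simp only [mem_union, mem_ofPred_eq, not_or, not_not] at hc
    exact hS0 y hy (by rw [hc.1, hc.2, add_zero])
  have hdisj : Disjoint {x | g x ≠ 0} {x | h x ≠ 0} :=
    disjoint_left.mpr fun y hgy hhy => mul_ne_zero hgy hhy (hgh y)
  exact hS.subset_left_of_subset_union (isOpen_ne_fun hg continuous_const)
    (isOpen_ne_fun hh continuous_const) hdisj hcover ⟨x, hxS, hx⟩ ha hga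

theorem eq_zero_of_eqOn_zero_Ioo {g h : ℝ → ℝ} (hg : Continuous g) (hh : Continuous h)
    (hgh : ∀ x, g x * h x = 0) {a b : ℝ} (hab : a < b)
    (hgh0 : ∀ x ∉ Ioo a b, g x + h x ≠ 0) (hg0 : EqOn g 0 (Ioo a b)) : g = 0 := by
  have hgIcc : EqOn g 0 (Icc a b) := by
    rw [← closure_Ioo hab.ne]
    exact hg0.closure hg continuous_const
  have hleft : EqOn g 0 (Iic a) :=
    isPreconnected_Iic.eqOn_zero_of_mul_eq_zero hg hh hgh
      (fun x hx => hgh0 x fun h => not_lt.mpr hx h.1) self_mem_Iic (hgIcc ⟨le_rfl, hab.le⟩)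
  have hright : EqOn g 0 (Ici b) :=
    isPreconnected_Ici.eqOn_zero_of_mul_eq_zero hg hh hgh
      (fun x hx => hgh0 x fun h => not_lt.mpr hx h.2) self_mem_Ici (hgIcc ⟨hab.le, le_rfl⟩)
  funext x
  rcases le_or_gt x a with hxa | hax
  · exact hleft hxa
  rcases lt_or_ge x b with hxb | hbx
  · exact hg0 ⟨hax, hxb⟩
  · exact hright hbx

theorem bspline_succ_apply (m : ℕ) (x : ℝ) :
    bspline (m + 1) x = ∫ s in (x - 1)..x, bspline m s := by
  show (∫ t in (0 : ℝ)..1, bspline m (x - t)) = _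
  simp

theorem bspline_nonneg : ∀ (m : ℕ) (x : ℝ), 0 ≤ bspline m x
  | 0, x => indicator_nonneg (fun _ _ => zero_le_one) x
  | m + 1, x => intervalIntegral.integral_nonneg zero_le_one fun t _ => bspline_nonneg m (x - t)

theorem bspline_eq_zero_of_notMem_Icc :
    ∀ (m : ℕ) {x : ℝ}, x ∉ Icc 0 ((m : ℝ) + 1) → bspline m x = 0
  | 0, x, hx => indicator_of_notMem (by simpa using hx) _
  | m + 1, x, hx => by
    have h : EqOn (fun t => bspline m (x - t)) 0 (uIcc 0 1) := fun t ht => by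
      rw [uIcc_of_le zero_le_one] at ht
      refine bspline_eq_zero_of_notMem_Icc m fun hxt => hx ⟨?_, ?_⟩ <;> push_cast <;>
        linarith [hxt.1, hxt.2, ht.1, ht.2]
    exact (intervalIntegral.integral_congr h).trans (by simp)

theorem continuous_bspline_succ {m : ℕ} (h : LocallyIntegrable (bspline m)) :
    Continuous (bspline (m + 1)) := by
  have hint : ∀ a b : ℝ, IntervalIntegrable (bspline m) volume a b := fun a b =>
    (h.integrableOn_isCompact isCompact_uIcc).intervalIntegrable
  have hF := intervalIntegral.continuous_primitive hint 0
  have heq : bspline (m + 1) = fun x =>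
      (∫ s in (0 : ℝ)..x, bspline m s) - ∫ s in (0 : ℝ)..(x - 1), bspline m s := by
    funext x
    rw [bspline_succ_apply, intervalIntegral.integral_interval_sub_left (hint 0 x) (hint 0 (x - 1))]
  rw [heq]
  exact hF.sub (hF.comp (continuous_id.sub continuous_const))

theorem locallyIntegrable_bspline : ∀ m : ℕ, LocallyIntegrable (bspline m)
  | 0 => ((integrable_indicator_iff measurableSet_Icc).mpr (integrableOn_const measure_Icc_lt_top.ne)).locallyIntegrable
  | m + 1 => (continuous_bspline_succ (locallyIntegrable_bspline m)).locallyIntegrable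

theorem intervalIntegrable_bspline (m : ℕ) (a b : ℝ) :
    IntervalIntegrable (bspline m) volume a b :=
  ((locallyIntegrable_bspline m).integrableOn_isCompact isCompact_uIcc).intervalIntegrable

theorem continuous_bspline {m : ℕ} (hm : 1 ≤ m) : Continuous (bspline m) := by
  obtain ⟨k, rfl⟩ := Nat.exists_eq_add_of_le' hm
  exact continuous_bspline_succ (locallyIntegrable_bspline k)

theorem bspline_eq_zero_of_notMem_Ioo {m : ℕ} (hm : 1 ≤ m) {x : ℝ}
    (hx : x ∉ Ioo 0 ((m : ℝ) + 1)) : bspline m x = 0 := by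
  have hsub : (Icc 0 ((m : ℝ) + 1))ᶜ ⊆ {x | bspline m x = 0} := fun y hy =>
    bspline_eq_zero_of_notMem_Icc m hy
  have hclosed := (isClosed_eq (continuous_bspline hm) continuous_const).closure_subset_iff.mpr hsub
  rw [closure_compl, interior_Icc] at hclosed
  exact hclosed hx

theorem bspline_pos : ∀ (m : ℕ) {x : ℝ}, x ∈ Ioo 0 ((m : ℝ) + 1) → 0 < bspline m x
  | 0, x, hx => by
    rw [bspline, indicator_of_mem (Ioo_subset_Icc_self (by simpa using hx))]
    exact one_pos
  | m + 1, x, ⟨h0, h1⟩ => by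
    push_cast at h1
    rw [bspline_succ_apply]
    have hlt : max (x - 1) 0 < min x ((m : ℝ) + 1) :=
      max_lt (lt_min (by linarith) (by linarith)) (lt_min h0 (by positivity))
    have hpos : 0 < ∫ s in max (x - 1) 0..min x ((m : ℝ) + 1), bspline m s :=
      intervalIntegral.intervalIntegral_pos_of_pos_on (intervalIntegrable_bspline m _ _)
        (fun s hs => bspline_pos m ⟨(le_max_right _ _).trans_lt hs.1,
          hs.2.trans_le (min_le_right _ _)⟩) hlt
    exact hpos.trans_le (intervalIntegral.integral_mono_interval (le_max_left _ _) hlt.le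
      (min_le_left _ _) (Filter.Eventually.of_forall (bspline_nonneg m))
      (intervalIntegrable_bspline m _ _))

theorem bspline_eqOn_eval (m : ℕ) (i : ℤ) :
    ∃ p : ℝ[X], EqOn (bspline m) p.eval (Ioo i (i + 1)) := by
  induction m generalizing i with
  | zero =>
    refine ⟨C (if i = 0 then 1 else 0), fun x hx => ?_⟩
    simp only [eval_C]
    split_ifs with hi
    · subst hi
      simp only [Int.cast_zero, zero_add] at hx
      exact indicator_of_mem (Ioo_subset_Icc_self hx) _
    · refine indicator_of_notMem (fun hx' => ?_) _
      rcases lt_or_gt_of_ne hi with hi | hi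
      · have : (i : ℝ) + 1 ≤ 0 := by exact_mod_cast (by omega : i + 1 ≤ 0)
        linarith [hx.2, hx'.1]
      · have : (1 : ℝ) ≤ i := by exact_mod_cast hi
        linarith [hx.1, hx'.2]
  | succ m ih =>
    obtain ⟨p, hp⟩ := ih i
    obtain ⟨p', hp'⟩ := ih (i - 1)
    obtain ⟨Q, rfl⟩ := p.exists_derivative_eq
    obtain ⟨Q', rfl⟩ := p'.exists_derivative_eq
    -- split `∫_{x-1}^x` at the knot `i`, where `bspline m` changes its polynomial piece
    refine ⟨C (Q'.eval (i : ℝ) - Q.eval (i : ℝ)) - Q'.comp (X - C 1) + Q, fun x hx => ?_⟩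
    have hleft : ∫ s in (x - 1)..i, bspline m s = ∫ s in (x - 1)..i, (derivative Q').eval s :=
      intervalIntegral.integral_congr_uIoo fun s hs => hp' <| by
        rw [uIoo_of_le (by linarith [hx.2])] at hs
        push_cast
        exact ⟨by linarith [hs.1, hx.1], by linarith [hs.2]⟩
    have hright : ∫ s in (i : ℝ)..x, bspline m s = ∫ s in (i : ℝ)..x, (derivative Q).eval s :=
      intervalIntegral.integral_congr_uIoo fun s hs => hp <| by
        rw [uIoo_of_le hx.1.le] at hs
        exact ⟨hs.1, by linarith [hs.2, hx.2]⟩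
    rw [bspline_succ_apply, ← intervalIntegral.integral_add_adjacent_intervals
      (intervalIntegrable_bspline m _ _) (intervalIntegrable_bspline m _ _), hleft, hright,
      integral_eval_derivative, integral_eval_derivative]
    simp only [eval_add, eval_sub, eval_C, eval_comp, eval_X]
    ring

theorem splineSeries_eq_sum_of_subset (m : ℕ) (c : ℤ → ℝ) {x : ℝ} {s : Finset ℤ}
    (hs : Finset.Icc (⌈x⌉ - (m : ℤ) - 1) ⌈x⌉ ⊆ s) :
    splineSeries m c x = ∑ k ∈ s, c k * bspline m (x - k) := by
  refine Finset.sum_subset hs fun k _ hk => ?_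
  have hceil := Int.ceil_lt_add_one x
  have hle := Int.le_ceil x
  rw [bspline_eq_zero_of_notMem_Icc m fun hxk => hk (Finset.mem_Icc.mpr ⟨?_, ?_⟩), mul_zero]
  · have : (⌈x⌉ : ℝ) - m - 2 < k := by linarith [hxk.2]
    have : ⌈x⌉ - (m : ℤ) - 2 < k := by exact_mod_cast this
    omega
  · have : (k : ℝ) < ⌈x⌉ + 1 := by linarith [hxk.1]
    have : k < ⌈x⌉ + 1 := by exact_mod_cast this
    omega

theorem continuous_splineSeries {m : ℕ} (hm : 1 ≤ m) (c : ℤ → ℝ) :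
    Continuous (splineSeries m c) := by
  refine continuous_iff_continuousAt.mpr fun x₀ => ?_
  let s := Finset.Icc (⌈x₀⌉ - (m : ℤ) - 2) (⌈x₀⌉ + 1)
  have hloc : ∀ x ∈ Ioo (x₀ - 1) (x₀ + 1),
      splineSeries m c x = ∑ k ∈ s, c k * bspline m (x - k) := fun x hx =>
    splineSeries_eq_sum_of_subset m c fun k hk => by
      have h1 := Int.ceil_mono hx.1.le
      have h2 := Int.ceil_mono hx.2.le
      rw [Int.ceil_sub_one] at h1
      rw [Int.ceil_add_one] at h2
      simp only [s, Finset.mem_Icc] at hk ⊢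
      omega
  have hcont : Continuous fun x => ∑ k ∈ s, c k * bspline m (x - k) :=
    continuous_finsetSum _ fun k _ =>
      continuous_const.mul ((continuous_bspline hm).comp (continuous_id.sub continuous_const))
  exact hcont.continuousAt.congr
    (Filter.eventuallyEq_of_mem (Ioo_mem_nhds (by linarith) (by linarith)) fun x hx => (hloc x hx).symm)

theorem splineSeries_eqOn_eval (m : ℕ) (c : ℤ → ℝ) (j : ℤ) :
    ∃ P : ℝ[X], EqOn (splineSeries m c) P.eval (Ioo j (j + 1)) := by
  choose p hp using bspline_eqOn_eval m
  refine ⟨∑ k ∈ Finset.Icc (j - (m : ℤ)) (j + 1), C (c k) * (p (j - k)).comp (X - C (k : ℝ)),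
    fun x hx => ?_⟩
  have hceil : ⌈x⌉ = j + 1 := Int.ceil_eq_iff.mpr ⟨by push_cast; linarith [hx.1], by
    push_cast; linarith [hx.2]⟩
  rw [splineSeries_eq_sum_of_subset m c (s := Finset.Icc (j - (m : ℤ)) (j + 1))
    (by rw [hceil]; exact Finset.Icc_subset_Icc (by omega) le_rfl)]
  simp only [eval_finsetSum, eval_mul, eval_C, eval_comp, eval_sub, eval_X]
  refine Finset.sum_congr rfl fun k _ => ?_
  congr 1
  exact hp (j - k) (by push_cast; exact ⟨by linarith [hx.1], by linarith [hx.2]⟩)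

theorem splineSeries_neg (m : ℕ) (c : ℤ → ℝ) (x : ℝ) :
    splineSeries m (-c) x = -splineSeries m c x := by
  simp only [splineSeries, Pi.neg_apply, neg_mul, Finset.sum_neg_distrib]

theorem splineSeries_congr {m : ℕ} (hm : 1 ≤ m) {c c' : ℤ → ℝ} {x : ℝ}
    (h : ∀ k : ℤ, (k : ℝ) < x → x < k + m + 1 → c k = c' k) :
    splineSeries m c x = splineSeries m c' x := by
  refine Finset.sum_congr rfl fun k _ => ?_
  by_cases hk : x - k ∈ Ioo 0 ((m : ℝ) + 1)
  · rw [h k (by linarith [hk.1]) (by linarith [hk.2])]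
  · simp only [bspline_eq_zero_of_notMem_Ioo hm hk, mul_zero]

theorem splineSeries_pos {m : ℕ} {c : ℤ → ℝ} (hc : 0 ≤ c) {x : ℝ} {k : ℤ} (hk : 0 < c k)
    (hkx : (k : ℝ) < x) (hxk : x < k + m + 1) : 0 < splineSeries m c x := by
  refine Finset.sum_pos' (fun i _ => mul_nonneg (hc i) (bspline_nonneg m _)) ⟨k, ?_,
    mul_pos hk (bspline_pos m ⟨by linarith, by linarith⟩)⟩
  have h1 : k < ⌈x⌉ := Int.lt_ceil.mpr hkx
  have h2 : ⌈x⌉ ≤ k + m + 1 := Int.ceil_le.mpr (by push_cast; linarith)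
  exact Finset.mem_Icc.mpr ⟨by omega, by omega⟩

theorem eqOn_zero_or_eqOn_zero_of_splineSeries_mul_eq_zero (m : ℕ) {c₁ c₂ : ℤ → ℝ}
    (h : ∀ x, splineSeries m c₁ x * splineSeries m c₂ x = 0) (j : ℤ) :
    EqOn (splineSeries m c₁) 0 (Ioo j (j + 1)) ∨ EqOn (splineSeries m c₂) 0 (Ioo j (j + 1)) := by
  obtain ⟨P, hP⟩ := splineSeries_eqOn_eval m c₁ j
  obtain ⟨Q, hQ⟩ := splineSeries_eqOn_eval m c₂ j
  have hPQ : P * Q = 0 := eq_zero_of_infinite_isRoot _ <|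
    (Ioo_infinite (lt_add_one (j : ℝ))).mono fun x hx => by
      simpa only [mem_ofPred_eq, IsRoot, eval_mul, ← hP hx, ← hQ hx] using h x
  refine (mul_eq_zero.mp hPQ).imp (fun h0 x hx => ?_) (fun h0 x hx => ?_)
  · simp [hP hx, h0]
  · simp [hQ hx, h0]

theorem not_separableGlobal_of_ne_zero_of_notMem_Ioo {m : ℕ} (hm : 1 ≤ m) {c : ℤ → ℝ} (n : ℤ)
    (hc : ∀ x ∉ Ioo (n : ℝ) (n + 1), splineSeries m c x ≠ 0) : ¬ SeparableGlobal m c := by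
  rintro ⟨c₁, c₂, hsum, ⟨x₁, hx₁⟩, ⟨x₂, hx₂⟩, hprod⟩
  have hne : ∀ x ∉ Ioo (n : ℝ) (n + 1), splineSeries m c₁ x + splineSeries m c₂ x ≠ 0 :=
    fun x hx => hsum x ▸ hc x hx
  have hcont := continuous_splineSeries hm
  rcases eqOn_zero_or_eqOn_zero_of_splineSeries_mul_eq_zero m hprod n with h0 | h0
  · exact hx₁ <| congrFun (eq_zero_of_eqOn_zero_Ioo (hcont c₁) (hcont c₂) hprod
      (lt_add_one _) hne h0) x₁
  · exact hx₂ <| congrFun (eq_zero_of_eqOn_zero_Ioo (hcont c₂) (hcont c₁)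
      (fun x => mul_comm (splineSeries m c₂ x) _ ▸ hprod x) (lt_add_one _)
      (fun x hx => add_comm (splineSeries m c₂ x) _ ▸ hne x hx) h0) x₂

def gapCoeff₁ (m : ℕ) (n : ℤ) : ℤ → ℝ :=
  fun k => if n ≤ k ∨ k ≤ n - m then 1 else 0

def gapCoeff₂ (m : ℕ) (n : ℤ) : ℤ → ℝ :=
  fun k => if n ≤ k then 1 else if k ≤ n - m then -1 else 0

theorem splineSeries_gapCoeff₁_pos {m : ℕ} (hm : 1 ≤ m) (n : ℤ) (x : ℝ) :
    0 < splineSeries m (gapCoeff₁ m n) x := by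
  have hc : 0 ≤ gapCoeff₁ m n := fun k => by
    simp only [gapCoeff₁, Pi.zero_apply]
    split_ifs <;> norm_num
  have hceil := Int.ceil_lt_add_one x
  have hle := Int.le_ceil x
  have hm' : (1 : ℝ) ≤ m := by exact_mod_cast hm
  -- `x` lies inside the supports of the translates at `⌈x⌉ - 1` and at `⌈x⌉ - m`,
  -- and one of these two knots is not in the gap `(n - m, n)` of `gapCoeff₁`
  rcases le_or_gt n (⌈x⌉ - 1) with h | h
  · exact splineSeries_pos hc (k := ⌈x⌉ - 1) (by simp only [gapCoeff₁, if_pos (Or.inl h), one_pos])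
      (by push_cast; linarith) (by push_cast; linarith)
  · exact splineSeries_pos hc (k := ⌈x⌉ - m) 
      (by simp only [gapCoeff₁, if_pos (Or.inr (by omega : ⌈x⌉ - (m : ℤ) ≤ n - m)), one_pos])
      (by push_cast; linarith) (by push_cast; linarith)

theorem splineSeries_gapCoeff₁_eq_neg {m : ℕ} (hm : 1 ≤ m) (n : ℤ) {x : ℝ} (hx : x ≤ n) :
    splineSeries m (gapCoeff₁ m n) x = -splineSeries m (gapCoeff₂ m n) x := by
  rw [← splineSeries_neg]
  refine splineSeries_congr hm fun k hkx _ => ?_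
  have hkn : k < n := by exact_mod_cast hkx.trans_le hx
  simp only [gapCoeff₁, gapCoeff₂, Pi.neg_apply]
  split_ifs <;> first | omega | norm_num

theorem splineSeries_gapCoeff₁_eq {m : ℕ} (hm : 1 ≤ m) (n : ℤ) {x : ℝ} (hx : n + 1 ≤ x) :
    splineSeries m (gapCoeff₁ m n) x = splineSeries m (gapCoeff₂ m n) x := by
  refine splineSeries_congr hm fun k _ hxk => ?_
  have hkn : n - m < k := by
    have : ((n - m : ℤ) : ℝ) < k := by push_cast; linarith
    exact_mod_cast this
  simp only [gapCoeff₁, gapCoeff₂]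
  split_ifs <;> first | omega | norm_num

theorem abs_splineSeries_gapCoeff₁_eq {m : ℕ} (hm : 1 ≤ m) (n : ℤ) {x : ℝ}
    (hx : x ∉ Ioo (n : ℝ) (n + 1)) :
    |splineSeries m (gapCoeff₁ m n) x| = |splineSeries m (gapCoeff₂ m n) x| := by
  rcases le_or_gt x n with hxn | hnx
  · rw [splineSeries_gapCoeff₁_eq_neg hm n hxn, abs_neg]
  · rw [splineSeries_gapCoeff₁_eq hm n (not_lt.mp fun h => hx ⟨hnx, h⟩)]

theorem not_separableGlobal_gapCoeff₁ {m : ℕ} (hm : 1 ≤ m) (n : ℤ) :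
    ¬ SeparableGlobal m (gapCoeff₁ m n) :=
  not_separableGlobal_of_ne_zero_of_notMem_Ioo hm n fun x _ =>
    (splineSeries_gapCoeff₁_pos hm n x).ne'

theorem not_separableGlobal_gapCoeff₂ {m : ℕ} (hm : 1 ≤ m) (n : ℤ) :
    ¬ SeparableGlobal m (gapCoeff₂ m n) := by
  refine not_separableGlobal_of_ne_zero_of_notMem_Ioo hm n fun x hx => ?_
  rw [← abs_pos, ← abs_splineSeries_gapCoeff₁_eq hm n hx, abs_pos]
  exact (splineSeries_gapCoeff₁_pos hm n x).ne'

/-- a global phaseless sampling set meets every open unit interval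
`(n, n+1)`; specifically, if `E ∩ (n, n+1) = ∅` then the explicit pair
`f₁ = Σ_{k≥n} φ_m(·-k) + Σ_{k≤n-m} φ_m(·-k)`, `f₂ = Σ_{k≥n} φ_m(·-k) - Σ_{k≤n-m} φ_m(·-k)`
is a counterexample to phase retrieval. -/
theorem stmt_18 (m : ℕ) (hm : 1 ≤ m) (E : Set ℝ)
    (hPS : IsGlobalPhaselessSamplingSet m E) :
    (∀ n : ℤ, (E ∩ Set.Ioo (n : ℝ) ((n : ℝ) + 1)).Nonempty) ∧
    (∀ n : ℤ, E ∩ Set.Ioo (n : ℝ) ((n : ℝ) + 1) = ∅ →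
      let c₁ : ℤ → ℝ := fun k => if n ≤ k ∨ k ≤ n - m then 1 else 0
      let c₂ : ℤ → ℝ := fun k => if n ≤ k then 1 else if k ≤ n - m then -1 else 0
      ¬ SeparableGlobal m c₁ ∧ ¬ SeparableGlobal m c₂ ∧
      (∃ x : ℝ, splineSeries m c₁ x ≠ splineSeries m c₂ x) ∧
      (∃ x : ℝ, splineSeries m c₁ x ≠ -splineSeries m c₂ x) ∧
      (∀ x : ℝ, x ≤ (n : ℝ) → splineSeries m c₁ x = -splineSeries m c₂ x) ∧
      (∀ x : ℝ, (n : ℝ) + 1 ≤ x → splineSeries m c₁ x = splineSeries m c₂ x) ∧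
      (∀ x ∈ E, |splineSeries m c₁ x| = |splineSeries m c₂ x|)) := by
  have hsamples (n : ℤ) (hE : E ∩ Ioo (n : ℝ) (n + 1) = ∅) (x : ℝ) (hx : x ∈ E) :
      |splineSeries m (gapCoeff₁ m n) x| = |splineSeries m (gapCoeff₂ m n) x| :=
    abs_splineSeries_gapCoeff₁_eq hm n fun hx' => (eq_empty_iff_forall_notMem.mp hE) x ⟨hx, hx'⟩
  have hne (n : ℤ) : ∃ x, splineSeries m (gapCoeff₁ m n) x ≠ splineSeries m (gapCoeff₂ m n) x :=
    ⟨n, fun h => by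
      linarith [splineSeries_gapCoeff₁_eq_neg hm n le_rfl, splineSeries_gapCoeff₁_pos hm n n]⟩
  have hne_neg (n : ℤ) :
      ∃ x, splineSeries m (gapCoeff₁ m n) x ≠ -splineSeries m (gapCoeff₂ m n) x :=
    ⟨n + 1, fun h => by
      linarith [splineSeries_gapCoeff₁_eq hm n le_rfl, splineSeries_gapCoeff₁_pos hm n (n + 1)]⟩
  refine ⟨fun n => nonempty_iff_ne_empty.mpr fun hE => ?_, fun n hE =>
    ⟨not_separableGlobal_gapCoeff₁ hm n, not_separableGlobal_gapCoeff₂ hm n, hne n, hne_neg n,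
      fun _ => splineSeries_gapCoeff₁_eq_neg hm n, fun _ => splineSeries_gapCoeff₁_eq hm n,
      hsamples n hE⟩⟩
  rcases hPS _ _ (not_separableGlobal_gapCoeff₁ hm n) (hsamples n hE) with h | h
  · obtain ⟨x, hx⟩ := hne n
    exact hx (h x).symm
  · obtain ⟨x, hx⟩ := hne_neg n
    exact hx (by rw [h x, neg_neg])
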